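/- For all n ≥ 0, spa'(8n+7) ≡ spa'(n) + 1 (mod 2). -/
import Mathlib

def spa' : ℕ → ℕ
  | 0 => 0
  | 1 => 1
  | n + 2 => if (n + 2) % 2 = 0 then spa' ((n + 2) / 2) else spa' n + spa' (n - 1)
decreasing_by all_goals omega

lemma spa'_odd (n : ℕ) : spa' (2*n+3) = spa' (2*n+1) + spa' (2*n) := by
  rw [show 2*n+3 = (2*n+1)+2 by ring, spa']
  have h : (2*n+1+2) % 2 = 1 := by omega
  simp [h, show 2*n+1-1 = 2*n by omega]

lemma spa'_even (n : ℕ) : spa' (2*n+2) = spa' (n+1) := by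
  rw [show 2*n+2 = (2*n)+2 by ring, spa']
  have h : (2*n+2) % 2 = 0 := by omega
  simp [h, show (2*n+2)/2 = n+1 by omega]

lemma spa'_key (m : ℕ) :
    spa' (8*m+15) = spa' (8*m+7) + 2*spa' (4*m+3) + 2*spa' (2*m+1) + spa' (m+1) + spa' m := by
  have h1 : spa' (8*m+15) = spa' (8*m+13) + spa' (8*m+12) := by
    rw [show 8*m+15 = 2*(4*m+6)+3 by ring, show 8*m+13 = 2*(4*m+6)+1 by ring,
        show 8*m+12 = 2*(4*m+6) by ring]; exact spa'_odd _
  have h2 : spa' (8*m+13) = spa' (8*m+11) + spa' (8*m+10) := by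
    rw [show 8*m+13 = 2*(4*m+5)+3 by ring, show 8*m+11 = 2*(4*m+5)+1 by ring,
        show 8*m+10 = 2*(4*m+5) by ring]; exact spa'_odd _
  have h3 : spa' (8*m+11) = spa' (8*m+9) + spa' (8*m+8) := by
    rw [show 8*m+11 = 2*(4*m+4)+3 by ring, show 8*m+9 = 2*(4*m+4)+1 by ring,
        show 8*m+8 = 2*(4*m+4) by ring]; exact spa'_odd _
  have h4 : spa' (8*m+9) = spa' (8*m+7) + spa' (8*m+6) := by
    rw [show 8*m+9 = 2*(4*m+3)+3 by ring, show 8*m+7 = 2*(4*m+3)+1 by ring,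
        show 8*m+6 = 2*(4*m+3) by ring]; exact spa'_odd _
  have h5 : spa' (8*m+12) = spa' (4*m+6) := by
    rw [show 8*m+12 = 2*(4*m+5)+2 by ring, show 4*m+6 = (4*m+5)+1 by ring]; exact spa'_even _
  have h6 : spa' (4*m+6) = spa' (2*m+3) := by
    rw [show 4*m+6 = 2*(2*m+2)+2 by ring, show 2*m+3 = (2*m+2)+1 by ring]; exact spa'_even _
  have h7 : spa' (8*m+10) = spa' (4*m+5) := by
    rw [show 8*m+10 = 2*(4*m+4)+2 by ring, show 4*m+5 = (4*m+4)+1 by ring]; exact spa'_even _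
  have h8 : spa' (8*m+8) = spa' (4*m+4) := by
    rw [show 8*m+8 = 2*(4*m+3)+2 by ring, show 4*m+4 = (4*m+3)+1 by ring]; exact spa'_even _
  have h8' : spa' (4*m+4) = spa' (2*m+2) := by
    rw [show 4*m+4 = 2*(2*m+1)+2 by ring, show 2*m+2 = (2*m+1)+1 by ring]; exact spa'_even _
  have h8'' : spa' (2*m+2) = spa' (m+1) := spa'_even m
  have h9 : spa' (8*m+6) = spa' (4*m+3) := by
    rw [show 8*m+6 = 2*(4*m+2)+2 by ring, show 4*m+3 = (4*m+2)+1 by ring]; exact spa'_even _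
  have h10 : spa' (4*m+5) = spa' (4*m+3) + spa' (4*m+2) := by
    rw [show 4*m+5 = 2*(2*m+1)+3 by ring, show 4*m+3 = 2*(2*m+1)+1 by ring,
        show 4*m+2 = 2*(2*m+1) by ring]; exact spa'_odd _
  have h11 : spa' (4*m+2) = spa' (2*m+1) := by
    rw [show 4*m+2 = 2*(2*m)+2 by ring, show 2*m+1 = (2*m)+1 by ring]; exact spa'_even _
  have h12 : spa' (2*m+3) = spa' (2*m+1) + spa' (2*m) := spa'_odd m
  have h13 : spa' (2*m) = spa' m := by
    cases m with
    | zero => rfl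
    | succ k => rw [show 2*(k+1) = 2*k+2 by ring]; exact spa'_even k
  omega

theorem spa'_cong (n : ℕ) : spa' (8 * n + 7) ≡ spa' n + 1 [MOD 2] := by
  induction n with
  | zero =>
      have h7 : spa' 7 = 3 := by
        have a7 : spa' 7 = spa' 5 + spa' 4 := spa'_odd 2
        have a5 : spa' 5 = spa' 3 + spa' 2 := spa'_odd 1
        have a3 : spa' 3 = spa' 1 + spa' 0 := spa'_odd 0
        have a4 : spa' 4 = spa' 2 := spa'_even 1
        have a2 : spa' 2 = spa' 1 := spa'_even 0
        have e0 : spa' 0 = 0 := by rw [spa']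
        have e1 : spa' 1 = 1 := by rw [spa']
        omega
      have h0 : spa' 0 = 0 := by rw [spa']
      simp [h7, h0, Nat.ModEq]
  | succ m ih =>
      have key := spa'_key m
      unfold Nat.ModEq at *
      have h : 8*(m+1)+7 = 8*m+15 := by ring
      rw [show 8*(m+1)+7 = 8*m+15 by ring] at *
      rw [key]
      omega
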